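/- Let q be a prime power with q = 4 or q ≥ 7, and let ρ ≥ 0 be an integer. Then the set S_ρ of Construction S is a minimal ρ-saturating set of size (ρ+1)q+1 in PG(2ρ+1, q). -/

import Mathlib

/-!
Split the coordinates `0, …, 2ρ + 1` into overlapping windows: level `0` is `{0, 1}` and carries
the line points `(1, a)`; level `u ≥ 1` is `{2u - 1, 2u, 2u + 1}` and carries the conic points
`(1, a, a²)`, `a ≠ 0`, and `T_u = (0, 1, 0)`; `A_ρ^∞` is the last unit vector. The even coordinate
`2u` is nonzero only on the points of level `u`.

So a vector with all even coordinates nonzero needs a point of every level, hence `ρ + 1` points,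
and a representation by `ρ + 1` points takes exactly one point per level. Its odd coordinates, read
from the top down, then force the points: for the sum of a point `P` of level `u₀` with `A₀⁰` and
the `T_u` at the other levels, every level above `u₀` must use `T_u` (a conic point would leave a
nonzero entry that nothing above cancels), and level `u₀` must use `P`. `A_ρ^∞` is forced in the
same way by a vector vanishing at coordinate `2ρ` but not at `2ρ + 1`.

For the upper bound, run through the levels from the top, carrying into coordinate `2u - 1` what the
levels above put there. In `F³`, `(d, s, y)` is a multiple of a conic point or of `T` for a suitable
carry `d` when `s ≠ 0`; a combination of two of them whenever `s ≠ 0` or `d y ≠ 0`; and `(d, 0, 0)`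
one of three. Two conic points need a parameter avoiding three values, and in odd characteristic
also the roots of a quadratic: this is possible as `q ≥ 4` in characteristic `2` and `q ≥ 7`
otherwise. If after `k` levels some carry costs `a ≤ k` points and every carry at most `b` points,
with `a + b ≤ 2k + 1`, the same holds after `k + 1` levels; at level `0` this leaves `ρ + 1` points.
-/

/-- `v` is a linear combination of at most `k` vectors of the set `S`. -/
def IsCombOfAtMost {F : Type} [Field F] {d : ℕ} (S : Set (Fin d → F)) (k : ℕ)
    (v : Fin d → F) : Prop :=
  ∃ (t : Finset (Fin d → F)) (c : (Fin d → F) → F),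
    ↑t ⊆ S ∧ t.card ≤ k ∧ v = ∑ w ∈ t, c w • w

/-- Every point of `PG(d-1,q)` (i.e. every nonzero vector of `F_q^d`) is a
linear combination of at most `k` vectors of `S`. -/
def SaturatesWithin {F : Type} [Field F] {d : ℕ} (S : Set (Fin d → F)) (k : ℕ) : Prop :=
  ∀ v : Fin d → F, v ≠ 0 → IsCombOfAtMost S k v

/-- `S` is a `ρ`-saturating set: every point is a linear combination of at most
`ρ+1` points of `S`, and `ρ` is the smallest value with this property. -/
def IsSaturatingSet {F : Type} [Field F] {d : ℕ} (S : Set (Fin d → F)) (ρ : ℕ) : Prop :=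
  SaturatesWithin S (ρ + 1) ∧ ∀ k < ρ + 1, ¬ SaturatesWithin S k

/-- `S` is a minimal `ρ`-saturating set: no proper subset of `S` is `ρ`-saturating. -/
def IsMinimalSaturatingSet {F : Type} [Field F] {d : ℕ} (S : Set (Fin d → F)) (ρ : ℕ) : Prop :=
  IsSaturatingSet S ρ ∧ ∀ S' ⊂ S, ¬ IsSaturatingSet S' ρ

/-- The unit vector of `F^N` whose only nonzero coordinate is a `1` in
position `k` (positions numbered from `0`). -/
def unitV (F : Type) [Field F] (N k : ℕ) : Fin N → F :=
  fun i => if (i : ℕ) = k then 1 else 0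

/-- Construction S ("Line+Ovals") in `PG(2ρ+1,q)`: the point `A₀⁰ = (1,0,…,0)`,
the truncated line `L₀* = {(1,a,0,…,0) : a ≠ 0}`, for each `u = 1,…,ρ` the
truncated conic `C_u*` (with `1` in position `2u-1`, `a` in position `2u`,
`a²` in position `2u+1`) and the point `T_u` (a `1` in position `2u`), and the
point `A_ρ^∞ = (0,…,0,1)`. -/
def constructionS (F : Type) [Field F] (ρ : ℕ) : Set (Fin (2 * ρ + 2) → F) :=
  {unitV F (2 * ρ + 2) 0}
  ∪ {w | ∃ a : F, a ≠ 0 ∧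
      w = fun i : Fin (2 * ρ + 2) => if (i : ℕ) = 0 then 1 else if (i : ℕ) = 1 then a else 0}
  ∪ {w | ∃ u : ℕ, 1 ≤ u ∧ u ≤ ρ ∧ ∃ a : F, a ≠ 0 ∧
      w = fun i : Fin (2 * ρ + 2) => if (i : ℕ) = 2 * u - 1 then 1 else if (i : ℕ) = 2 * u then a
            else if (i : ℕ) = 2 * u + 1 then a ^ 2 else 0}
  ∪ {w | ∃ u : ℕ, 1 ≤ u ∧ u ≤ ρ ∧ w = unitV F (2 * ρ + 2) (2 * u)}
  ∪ {unitV F (2 * ρ + 2) (2 * ρ + 1)}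

section Comb

variable {F : Type} [Field F] {d : ℕ} {S : Set (Fin d → F)} {k k' : ℕ} {v w : Fin d → F}

theorem IsCombOfAtMost.mono (h : IsCombOfAtMost S k v) (hk : k ≤ k') : IsCombOfAtMost S k' v := by
  obtain ⟨t, c, htS, htk, rfl⟩ := h
  exact ⟨t, c, htS, htk.trans hk, rfl⟩

theorem isCombOfAtMost_of_eq_zero (hv : v = 0) : IsCombOfAtMost S k v :=
  ⟨∅, 0, by simp, by simp, by simp [hv]⟩

theorem isCombOfAtMost_smul (hw : w ∈ S) (c : F) : IsCombOfAtMost S 1 (c • w) := by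
  classical
  exact ⟨{w}, fun _ => c, by simpa using hw, by simp, by simp⟩

theorem IsCombOfAtMost.add (h : IsCombOfAtMost S k v) (h' : IsCombOfAtMost S k' w) :
    IsCombOfAtMost S (k + k') (v + w) := by
  classical
  obtain ⟨t, c, htS, htk, rfl⟩ := h
  obtain ⟨t', c', htS', htk', rfl⟩ := h'
  refine ⟨t ∪ t', fun x => (if x ∈ t then c x else 0) + (if x ∈ t' then c' x else 0),
    by simpa using And.intro htS htS', (Finset.card_union_le _ _).trans (add_le_add htk htk'), ?_⟩
  simp [add_smul, Finset.sum_add_distrib, ite_smul, Finset.sum_ite_mem]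

theorem isCombOfAtMost_sum {ι : Type*} (t : Finset ι) (c : ι → F) {g : ι → Fin d → F}
    (hg : ∀ i ∈ t, g i ∈ S) : IsCombOfAtMost S t.card (∑ i ∈ t, c i • g i) := by
  classical
  induction t using Finset.induction_on with
  | empty => exact isCombOfAtMost_of_eq_zero (by simp)
  | insert i t hi ih =>
    rw [Finset.sum_insert hi, Finset.card_insert_of_notMem hi, add_comm t.card]
    exact (isCombOfAtMost_smul (hg i (by simp)) (c i)).add
      (ih fun j hj => hg j (Finset.mem_insert_of_mem hj))

theorem IsCombOfAtMost.map {m : ℕ} {K : Set (Fin m → F)} {x : Fin m → F}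
    (h : IsCombOfAtMost K k x) (f : (Fin m → F) →ₗ[F] Fin d → F)
    (hf : ∀ y ∈ K, f y ∈ S) : IsCombOfAtMost S k (f x) := by
  obtain ⟨t, c, htK, htk, rfl⟩ := h
  simp only [map_sum, map_smul]
  exact (isCombOfAtMost_sum t c fun y hy => hf y (htK hy)).mono htk

theorem exists_mem_apply_ne_zero_of_eq_sum {t : Finset (Fin d → F)} {c : (Fin d → F) → F}
    (hv : v = ∑ w ∈ t, c w • w) {i : Fin d} (h : v i ≠ 0) : ∃ w ∈ t, w i ≠ 0 := by
  rw [hv, Finset.sum_apply] at h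
  obtain ⟨w, hw, hne⟩ := Finset.exists_ne_zero_of_sum_ne_zero h
  exact ⟨w, hw, right_ne_zero_of_mul hne⟩

end Comb

section Conic

variable {F : Type} [Field F]

open Classical in
noncomputable def conicPt (a : F) : Fin 3 → F := if a = 0 then ![0, 1, 0] else ![1, a, a ^ 2]

theorem conicPt_of_ne_zero {a : F} (ha : a ≠ 0) : conicPt a = ![1, a, a ^ 2] := if_neg ha

theorem conicPt_zero : conicPt (0 : F) = ![0, 1, 0] := if_pos rfl

theorem exists_isCombOfAtMost_conic_one {s : F} (hs : s ≠ 0) (y : F) :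
    ∃ d, IsCombOfAtMost (Set.range conicPt) 1 ![d, s, y] := by
  by_cases hy : y = 0
  · refine ⟨0, ?_⟩
    convert isCombOfAtMost_smul (Set.mem_range_self (f := conicPt) 0) s using 1
    rw [conicPt_zero, Matrix.smul_vec3, hy]
    simp
  · refine ⟨s ^ 2 / y, ?_⟩
    convert isCombOfAtMost_smul (Set.mem_range_self (f := conicPt) (y / s)) (s ^ 2 / y) using 1
    rw [conicPt_of_ne_zero (div_ne_zero hy hs), Matrix.smul_vec3]
    refine Matrix.vec3_eq ?_ ?_ ?_ <;> simp only [smul_eq_mul] <;> field_simp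

/-- Two points `(1, a, a²)` and `(1, b, b²)` realise `(d, s, y)` exactly when
`s (a + b) - d a b = y`; the hypotheses make `b` from that relation differ from `0` and `a`. -/
theorem isCombOfAtMost_conic_two_of_quadratic_ne_zero {a d s y : F} (ha : a ≠ 0)
    (hda : d * a ≠ s) (hsa : s * a ≠ y) (hq : d * a ^ 2 - 2 * s * a + y ≠ 0) :
    IsCombOfAtMost (Set.range conicPt) 2 ![d, s, y] := by
  obtain ⟨b, hb⟩ : ∃ b, b * (s - d * a) = y - s * a :=
    ⟨_, div_mul_cancel₀ _ (sub_ne_zero.mpr (Ne.symm hda))⟩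
  have hb0 : b ≠ 0 := by
    rintro rfl
    exact hsa (by linear_combination hb)
  have hab : a - b ≠ 0 := by
    intro h
    rw [← sub_eq_zero.mp h] at hb
    exact hq (by linear_combination -hb)
  obtain ⟨γ, hγ⟩ : ∃ γ, γ * (a - b) = s - d * b := ⟨_, div_mul_cancel₀ _ hab⟩
  convert (isCombOfAtMost_smul (Set.mem_range_self (f := conicPt) a) γ).add
    (isCombOfAtMost_smul (Set.mem_range_self (f := conicPt) b) (d - γ)) using 1
  rw [conicPt_of_ne_zero ha, conicPt_of_ne_zero hb0, Matrix.smul_vec3, Matrix.smul_vec3,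
    Matrix.vec3_add]
  refine Matrix.vec3_eq ?_ ?_ ?_ <;> simp only [smul_eq_mul]
  · ring
  · linear_combination -hγ
  · linear_combination -(a + b) * hγ - hb

theorem isCombOfAtMost_conic_two_of_mul_sq_eq {a d s y : F} (ha : a ≠ 0) (h : d * a ^ 2 = y) :
    IsCombOfAtMost (Set.range conicPt) 2 ![d, s, y] := by
  convert (isCombOfAtMost_smul (Set.mem_range_self (f := conicPt) a) d).add
    (isCombOfAtMost_smul (Set.mem_range_self (f := conicPt) 0) (s - d * a)) using 1
  rw [conicPt_of_ne_zero ha, conicPt_zero, Matrix.smul_vec3, Matrix.smul_vec3, Matrix.vec3_add]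
  refine Matrix.vec3_eq ?_ ?_ ?_ <;> simp only [smul_eq_mul]
  · ring
  · ring
  · linear_combination -h

theorem mul_ne_of_ne_div {x z a : F} (hxz : x ≠ 0 ∨ z ≠ 0) (ha : a ≠ z / x) :
    x * a ≠ z := by
  rcases eq_or_ne x 0 with rfl | hx
  · simpa [eq_comm] using hxz
  · exact fun h => ha (by rw [eq_div_iff hx]; linear_combination h)

end Conic

section FiniteField

variable {F : Type} [Field F] [Fintype F]

theorem card_filter_quadratic_eq_zero_le_two [DecidableEq F] {d e f : F} (h : d ≠ 0 ∨ e ≠ 0) :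
    (Finset.univ.filter fun a : F => d * a ^ 2 + e * a + f = 0).card ≤ 2 := by
  open Polynomial in
  set p : F[X] := C d * X ^ 2 + C e * X + C f
  have hp : p ≠ 0 := by
    intro hp
    have h2 : p.coeff 2 = d := by simp [p]
    have h1 : p.coeff 1 = e := by simp [p]
    rw [hp, coeff_zero] at h1 h2
    tauto
  calc _ ≤ p.roots.toFinset.card := by
        refine Finset.card_le_card fun a ha => ?_
        simpa [p, hp] using ha
    _ ≤ p.roots.card := p.roots.toFinset_card_le
    _ ≤ p.natDegree := p.card_roots'
    _ ≤ 2 := natDegree_quadratic_le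

theorem two_eq_zero_of_card_eq_four (h : Fintype.card F = 4) : (2 : F) = 0 := by
  have h4 := FiniteField.cast_card_eq_zero F
  rw [h] at h4
  exact pow_eq_zero_iff two_ne_zero |>.mp (by linear_combination h4)

theorem isCombOfAtMost_conic_two_of_two_eq_zero (hF : 4 ≤ Fintype.card F) (h2 : (2 : F) = 0)
    {d s y : F} (h : s ≠ 0 ∨ d ≠ 0 ∧ y ≠ 0) :
    IsCombOfAtMost (Set.range conicPt) 2 ![d, s, y] := by
  classical
  by_cases hdy : d ≠ 0 ∧ y ≠ 0
  · have hchar : ringChar F = 2 :=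
      ringChar.eq_iff.mpr (CharTwo.of_one_ne_zero_of_two_eq_zero one_ne_zero h2)
    obtain ⟨a, ha⟩ := FiniteField.isSquare_of_char_two hchar (y / d)
    have ha0 : a ≠ 0 := by
      rintro rfl
      simp [hdy.1, hdy.2] at ha
    exact isCombOfAtMost_conic_two_of_mul_sq_eq ha0 (by rw [sq, ← ha]; field_simp [hdy.1])
  have hs : s ≠ 0 := by tauto
  by_cases hdy' : d = 0 ∧ y = 0
  · obtain ⟨rfl, rfl⟩ := hdy'
    convert (isCombOfAtMost_smul (Set.mem_range_self (f := conicPt) 0) s).mono one_le_two using 1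
    ext i; fin_cases i <;> simp [conicPt_zero]
  obtain ⟨a, -, ha⟩ := Finset.exists_mem_notMem_of_card_lt_card
    (s := {0, s / d, y / s}) (t := Finset.univ) (by
      have := Finset.card_le_three (a := (0 : F)) (b := s / d) (c := y / s)
      rw [Finset.card_univ]; omega)
  simp only [Finset.mem_insert, Finset.mem_singleton, not_or] at ha
  refine isCombOfAtMost_conic_two_of_quadratic_ne_zero ha.1 (mul_ne_of_ne_div (by tauto) ha.2.1)
    (mul_ne_of_ne_div (Or.inl hs) ha.2.2) ?_
  rw [h2, zero_mul, zero_mul, sub_zero]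
  by_cases hd : d = 0
  · simpa [hd] using fun hy => hdy' ⟨hd, hy⟩
  · have hy : y = 0 := by tauto
    simpa [hy] using And.intro hd ha.1

theorem isCombOfAtMost_conic_two_of_two_ne_zero (hF : 7 ≤ Fintype.card F) (h2 : (2 : F) ≠ 0)
    {d s y : F} (h : s ≠ 0 ∨ d ≠ 0 ∧ y ≠ 0) :
    IsCombOfAtMost (Set.range conicPt) 2 ![d, s, y] := by
  classical
  set roots := Finset.univ.filter fun a : F => d * a ^ 2 + -2 * s * a + y = 0
  have hroots : roots.card ≤ 2 := card_filter_quadratic_eq_zero_le_two <| by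
    rcases h with hs | hdy
    exacts [Or.inr (mul_ne_zero (neg_ne_zero.mpr h2) hs), Or.inl hdy.1]
  obtain ⟨a, -, ha⟩ := Finset.exists_mem_notMem_of_card_lt_card
    (s := {0, s / d, y / s} ∪ roots) (t := Finset.univ) (by
      have := Finset.card_le_three (a := (0 : F)) (b := s / d) (c := y / s)
      have := Finset.card_union_le {0, s / d, y / s} roots
      rw [Finset.card_univ]; omega)
  simp only [roots, Finset.mem_union, Finset.mem_insert, Finset.mem_singleton, Finset.mem_filter,
    Finset.mem_univ, true_and, not_or] at ha
  refine isCombOfAtMost_conic_two_of_quadratic_ne_zero ha.1.1 (mul_ne_of_ne_div (by tauto) ha.1.2.1)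
    (mul_ne_of_ne_div (by tauto) ha.1.2.2) ?_
  exact fun hq => ha.2 (by linear_combination hq)

theorem isCombOfAtMost_conic_two (hF : Fintype.card F = 4 ∨ 7 ≤ Fintype.card F) {d s y : F}
    (h : s ≠ 0 ∨ d ≠ 0 ∧ y ≠ 0) : IsCombOfAtMost (Set.range conicPt) 2 ![d, s, y] := by
  by_cases h2 : (2 : F) = 0
  · exact isCombOfAtMost_conic_two_of_two_eq_zero (by omega) h2 h
  · exact isCombOfAtMost_conic_two_of_two_ne_zero
      (hF.resolve_left fun h4 => h2 (two_eq_zero_of_card_eq_four h4)) h2 h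

theorem isCombOfAtMost_conic_three (hF : Fintype.card F = 4 ∨ 7 ≤ Fintype.card F) (d : F) :
    IsCombOfAtMost (Set.range conicPt) 3 ![d, 0, 0] := by
  convert (isCombOfAtMost_conic_two hF (d := d) (y := 0) (Or.inl one_ne_zero)).add
    (isCombOfAtMost_smul (Set.mem_range_self (f := conicPt) 0) (-1)) using 1
  ext i; fin_cases i <;> simp [conicPt_zero]

end FiniteField

section Window

variable {F : Type} [Field F]

/-- For `u = 0` the entry `x 0`, which belongs at coordinate `2u - 1 = -1`, is dropped. -/
def window (n u : ℕ) : (Fin 3 → F) →ₗ[F] Fin n → F where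
  toFun x i :=
    if (i : ℕ) = 2 * u then x 1 else if (i : ℕ) = 2 * u + 1 then x 2
    else if (i : ℕ) + 1 = 2 * u then x 0 else 0
  map_add' x y := by
    ext i
    simp only [Pi.add_apply]
    split_ifs <;> simp
  map_smul' c x := by
    ext i
    simp only [Pi.smul_apply, smul_eq_mul, RingHom.id_apply]
    split_ifs <;> simp

variable {n u : ℕ} {x : Fin 3 → F} {i : Fin n}

theorem window_apply : window n u x i = if (i : ℕ) = 2 * u then x 1
    else if (i : ℕ) = 2 * u + 1 then x 2 else if (i : ℕ) + 1 = 2 * u then x 0 else 0 := rfl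

theorem window_apply_of_eq_two_mul (h : (i : ℕ) = 2 * u) : window n u x i = x 1 := by
  simp [window_apply, h]

theorem window_apply_of_eq_two_mul_add_one (h : (i : ℕ) = 2 * u + 1) : window n u x i = x 2 := by
  simp [window_apply, h]

theorem window_apply_of_add_one_eq_two_mul (h : (i : ℕ) + 1 = 2 * u) : window n u x i = x 0 := by
  rw [window_apply, if_neg (by omega), if_neg (by omega), if_pos h]

theorem window_apply_eq_zero (h : (i : ℕ) + 1 < 2 * u ∨ 2 * u + 1 < i) :
    window n u x i = 0 := by
  simp only [window_apply]
  split_ifs <;> first | rfl | omega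

theorem sum_window_apply_of_eq_two_mul {m j : ℕ} (z : ℕ → Fin 3 → F) (hj : j < m)
    (hi : (i : ℕ) = 2 * j) : (∑ u ∈ Finset.range m, window n u (z u)) i = z j 1 := by
  rw [Finset.sum_apply, Finset.sum_eq_single_of_mem j (Finset.mem_range.mpr hj)]
  · exact window_apply_of_eq_two_mul hi
  · intro u _ hu
    exact window_apply_eq_zero (by omega)

theorem sum_window_apply_of_eq_two_mul_add_one {m j : ℕ} (z : ℕ → Fin 3 → F) (hj : j < m)
    (hi : (i : ℕ) = 2 * j + 1) : (∑ u ∈ Finset.range m, window n u (z u)) i =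
      z j 2 + if j + 1 < m then z (j + 1) 0 else 0 := by
  rw [Finset.sum_apply]
  split_ifs with hj'
  · rw [Finset.sum_eq_add_of_mem j (j + 1) (Finset.mem_range.mpr hj)
      (Finset.mem_range.mpr hj') (by omega)]
    · rw [window_apply_of_eq_two_mul_add_one hi, window_apply_of_add_one_eq_two_mul (by omega)]
    · intro u _ hu
      exact window_apply_eq_zero (by omega)
  · rw [Finset.sum_eq_single_of_mem j (Finset.mem_range.mpr hj), add_zero]
    · exact window_apply_of_eq_two_mul_add_one hi
    · intro u hu hne
      exact window_apply_eq_zero (by have := Finset.mem_range.mp hu; omega)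

end Window

section Tail

open Fin.NatCast

variable {F : Type} [Field F] {n : ℕ}

def tail (v : Fin n → F) (u : ℕ) (d : F) : Fin n → F :=
  fun i => if (i : ℕ) + 1 < 2 * u then 0 else if (i : ℕ) + 1 = 2 * u then d else v i

theorem tail_zero (v : Fin n → F) (d : F) : tail v 0 d = v := by
  funext i
  simp [tail]

theorem tail_eq_tail_add_window [NeZero n] (v : Fin n → F) {u : ℕ} (hu : 2 * u + 1 < n)
    (d d' : F) :
    tail v u d = tail v (u + 1) d' + window n u ![d, v ↑(2 * u), v ↑(2 * u + 1) - d'] := by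
  funext i
  have hcast : ∀ j < n, (i : ℕ) = j → i = ↑j := fun j hj h =>
    Fin.ext (by rw [Fin.val_cast_of_lt hj, h])
  simp only [tail, Pi.add_apply, window_apply]
  split_ifs <;> first
    | omega
    | (rw [← hcast (2 * u) (by omega) (by omega)]; simp)
    | (rw [← hcast (2 * u + 1) (by omega) (by omega)]; simp)
    | simp

end Tail

section Construction

variable {F : Type} [Field F] {ρ : ℕ}

noncomputable def levelVec : ℕ → F → Fin 3 → F
  | 0, a => ![0, 1, a]
  | _ + 1, a => conicPt a

theorem levelVec_one_ne_zero (u : ℕ) (a : F) : levelVec u a 1 ≠ 0 := by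
  rcases u with _ | u
  · simp [levelVec]
  · by_cases ha : a = 0 <;> simp [levelVec, conicPt_zero, conicPt_of_ne_zero, ha]

theorem levelVec_two (u : ℕ) (a : F) : levelVec u a 2 = a * levelVec u a 1 := by
  rcases u with _ | u
  · simp [levelVec]
  · by_cases ha : a = 0 <;> simp [levelVec, conicPt_zero, conicPt_of_ne_zero, ha, sq]

theorem levelVec_succ_zero_zero (u : ℕ) : levelVec (u + 1) (0 : F) 0 = 0 := by
  simp [levelVec, conicPt_zero]

theorem mul_levelVec_succ_zero_eq_zero_iff (u : ℕ) (c a : F) :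
    c * levelVec (u + 1) a 0 = 0 ↔ c * levelVec (u + 1) a 2 = 0 := by
  by_cases ha : a = 0 <;> simp [levelVec, conicPt_zero, conicPt_of_ne_zero, ha]

theorem eq_of_smul_levelVec {u : ℕ} {a b c : F} (h1 : c * levelVec u b 1 = levelVec u a 1)
    (h2 : c * levelVec u b 2 = levelVec u a 2) : b = a := by
  rw [levelVec_two, levelVec_two, ← h1] at h2
  exact mul_right_cancel₀ (h1 ▸ levelVec_one_ne_zero u a) (by linear_combination h2)

/-- For `u = 0`: `A₀⁰` if `a = 0`, else a point of `L₀*`; for `u ≥ 1`: `T_u` if `a = 0`, else a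
point of `C_u*`. -/
noncomputable def levelPt (ρ u : ℕ) (a : F) : Fin (2 * ρ + 2) → F :=
  window (2 * ρ + 2) u (levelVec u a)

theorem levelPt_zero (a : F) : levelPt ρ 0 a =
    fun i : Fin (2 * ρ + 2) => if (i : ℕ) = 0 then 1 else if (i : ℕ) = 1 then a else 0 := by
  funext i
  simp only [levelPt, window_apply, levelVec]
  split_ifs <;> simp_all

theorem levelPt_zero_zero : levelPt ρ 0 (0 : F) = unitV F (2 * ρ + 2) 0 := by
  rw [levelPt_zero]
  funext i
  simp only [unitV]
  split_ifs <;> rfl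

theorem levelPt_succ_zero (u : ℕ) :
    levelPt ρ (u + 1) (0 : F) = unitV F (2 * ρ + 2) (2 * (u + 1)) := by
  funext i
  simp only [levelPt, window_apply, levelVec, conicPt_zero, unitV]
  split_ifs <;> simp_all

theorem levelPt_succ_of_ne_zero (u : ℕ) {a : F} (ha : a ≠ 0) : levelPt ρ (u + 1) a =
    fun i : Fin (2 * ρ + 2) => if (i : ℕ) = 2 * (u + 1) - 1 then 1
      else if (i : ℕ) = 2 * (u + 1) then a else if (i : ℕ) = 2 * (u + 1) + 1 then a ^ 2 else 0 := by
  funext i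
  simp only [levelPt, window_apply, levelVec, conicPt_of_ne_zero ha]
  split_ifs <;> first | omega | simp_all

theorem mem_constructionS_iff {w : Fin (2 * ρ + 2) → F} : w ∈ constructionS F ρ ↔
    (∃ u ≤ ρ, ∃ a, levelPt ρ u a = w) ∨ w = unitV F (2 * ρ + 2) (2 * ρ + 1) := by
  constructor
  · rintro ((((rfl | ⟨a, -, rfl⟩) | ⟨u, hu, huρ, a, ha, rfl⟩) | ⟨u, hu, huρ, rfl⟩) |
      rfl)
    · exact Or.inl ⟨0, Nat.zero_le _, 0, levelPt_zero_zero⟩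
    · exact Or.inl ⟨0, Nat.zero_le _, a, levelPt_zero a⟩
    · obtain ⟨u, rfl⟩ := Nat.exists_eq_add_of_le' hu
      exact Or.inl ⟨u + 1, huρ, a, levelPt_succ_of_ne_zero u ha⟩
    · obtain ⟨u, rfl⟩ := Nat.exists_eq_add_of_le' hu
      exact Or.inl ⟨u + 1, huρ, 0, levelPt_succ_zero u⟩
    · exact Or.inr rfl
  · rintro (⟨u, hu, a, rfl⟩ | rfl)
    · rcases u with _ | u <;> by_cases ha : a = 0
      · subst ha
        exact Or.inl (Or.inl (Or.inl (Or.inl levelPt_zero_zero)))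
      · exact Or.inl (Or.inl (Or.inl (Or.inr ⟨a, ha, levelPt_zero a⟩)))
      · subst ha
        exact Or.inl (Or.inr ⟨u + 1, by omega, hu, levelPt_succ_zero u⟩)
      · exact Or.inl (Or.inl (Or.inr
          ⟨u + 1, by omega, hu, a, ha, levelPt_succ_of_ne_zero u ha⟩))
    · exact Or.inr rfl

end Construction

section Levels

open Fin.NatCast

variable {F : Type} [Field F] {ρ : ℕ}

theorem val_natCast_of_le {j : ℕ} (hj : j ≤ 2 * ρ + 1) : ((j : Fin (2 * ρ + 2)) : ℕ) = j :=
  Fin.val_cast_of_lt (by omega)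

theorem sum_window_apply_two_mul (z : ℕ → Fin 3 → F) {j : ℕ} (hj : j ≤ ρ) :
    (∑ u ∈ Finset.range (ρ + 1), window (2 * ρ + 2) u (z u)) ↑(2 * j) = z j 1 :=
  sum_window_apply_of_eq_two_mul z (show j < ρ + 1 by omega) (val_natCast_of_le (by omega))

theorem sum_window_apply_two_mul_add_one (z : ℕ → Fin 3 → F) {j : ℕ} (hj : j ≤ ρ) :
    (∑ u ∈ Finset.range (ρ + 1), window (2 * ρ + 2) u (z u)) ↑(2 * j + 1) =
      z j 2 + if j < ρ then z (j + 1) 0 else 0 := by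
  rw [sum_window_apply_of_eq_two_mul_add_one z (show j < ρ + 1 by omega)
    (val_natCast_of_le (by omega))]
  simp only [add_lt_add_iff_right]

theorem levelPt_apply_two_mul {u : ℕ} (hu : u ≤ ρ) (a : F) :
    levelPt ρ u a ↑(2 * u) = levelVec u a 1 :=
  window_apply_of_eq_two_mul (val_natCast_of_le (by omega))

theorem levelPt_apply_two_mul_add_one {u : ℕ} (hu : u ≤ ρ) (a : F) :
    levelPt ρ u a ↑(2 * u + 1) = levelVec u a 2 :=
  window_apply_of_eq_two_mul_add_one (val_natCast_of_le (by omega))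

theorem levelPt_apply_two_mul_ne_zero_iff {u j : ℕ} (a : F) (hj : j ≤ ρ) :
    levelPt ρ u a ↑(2 * j) ≠ 0 ↔ j = u := by
  refine ⟨fun h => ?_, ?_⟩
  · by_contra hne
    exact h (window_apply_eq_zero (by rw [val_natCast_of_le (by omega)]; omega))
  · rintro rfl
    rw [levelPt_apply_two_mul hj]
    exact levelVec_one_ne_zero j a

theorem unitV_last_apply_two_mul {j : ℕ} (hj : j ≤ ρ) :
    unitV F (2 * ρ + 2) (2 * ρ + 1) ↑(2 * j) = 0 := by
  simp only [unitV, val_natCast_of_le (show 2 * j ≤ 2 * ρ + 1 by omega)]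
  exact if_neg (by omega)

theorem levelPt_inj {u u' : ℕ} {a a' : F} (hu : u ≤ ρ)
    (h : levelPt ρ u a = levelPt ρ u' a') : u = u' ∧ a = a' := by
  obtain rfl : u = u' := (levelPt_apply_two_mul_ne_zero_iff a' hu).mp
    (h ▸ (levelPt_apply_two_mul_ne_zero_iff a hu).mpr rfl)
  have h1 := congrFun h ↑(2 * u)
  have h2 := congrFun h ↑(2 * u + 1)
  rw [levelPt_apply_two_mul hu, levelPt_apply_two_mul hu] at h1
  rw [levelPt_apply_two_mul_add_one hu, levelPt_apply_two_mul_add_one hu] at h2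
  exact ⟨rfl, eq_of_smul_levelVec (c := 1) (by rw [one_mul, h1]) (by rw [one_mul, h2])⟩

theorem exists_levelPt_eq_of_apply_two_mul_ne_zero {w : Fin (2 * ρ + 2) → F}
    (hw : w ∈ constructionS F ρ) {j : ℕ} (hj : j ≤ ρ) (h : w ↑(2 * j) ≠ 0) :
    ∃ a, levelPt ρ j a = w := by
  rcases mem_constructionS_iff.mp hw with ⟨u, -, a, rfl⟩ | rfl
  · exact ⟨a, by rw [(levelPt_apply_two_mul_ne_zero_iff a hj).mp h]⟩
  · exact absurd (unitV_last_apply_two_mul hj) h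

theorem exists_levelPt_eq_of_apply_last_ne_zero {w : Fin (2 * ρ + 2) → F}
    (hw : w ∈ constructionS F ρ) (hne : w ≠ unitV F (2 * ρ + 2) (2 * ρ + 1))
    (h : w ↑(2 * ρ + 1) ≠ 0) : ∃ a, levelPt ρ ρ a = w := by
  rcases mem_constructionS_iff.mp hw with ⟨u, hu, a, rfl⟩ | rfl
  · obtain rfl : u = ρ := by
      by_contra hne
      exact h (window_apply_eq_zero (by rw [val_natCast_of_le le_rfl]; omega))
    exact ⟨a, rfl⟩
  · exact absurd rfl hne

theorem injOn_levelPt (α : ℕ → F) :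
    Set.InjOn (fun u => levelPt ρ u (α u)) (Finset.range (ρ + 1) : Set ℕ) :=
  fun _ hu _ _ h => (levelPt_inj (Nat.lt_succ_iff.mp (Finset.mem_range.mp hu)) h).1

theorem exists_levelPt_mem {t : Finset (Fin (2 * ρ + 2) → F)} (ht : ↑t ⊆ constructionS F ρ)
    (h : ∀ u ≤ ρ, ∃ w ∈ t, w ↑(2 * u) ≠ 0) :
    ∃ α : ℕ → F, ∀ u ≤ ρ, levelPt ρ u (α u) ∈ t := by
  have : ∀ u, ∃ a, u ≤ ρ → levelPt ρ u a ∈ t := by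
    intro u
    by_cases hu : u ≤ ρ
    · obtain ⟨w, hwt, hw⟩ := h u hu
      obtain ⟨a, rfl⟩ := exists_levelPt_eq_of_apply_two_mul_ne_zero (ht hwt) hu hw
      exact ⟨a, fun _ => hwt⟩
    · exact ⟨0, fun h => absurd h hu⟩
  choose α hα using this
  exact ⟨α, hα⟩

theorem le_card_of_forall_apply_two_mul_ne_zero {t : Finset (Fin (2 * ρ + 2) → F)}
    (ht : ↑t ⊆ constructionS F ρ) (h : ∀ u ≤ ρ, ∃ w ∈ t, w ↑(2 * u) ≠ 0) :
    ρ + 1 ≤ t.card := by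
  classical
  obtain ⟨α, hα⟩ := exists_levelPt_mem ht h
  calc ρ + 1 = ((Finset.range (ρ + 1)).image fun u => levelPt ρ u (α u)).card := by
        rw [Finset.card_image_of_injOn (injOn_levelPt α), Finset.card_range]
    _ ≤ t.card := Finset.card_le_card fun w hw => by
        obtain ⟨u, hu, rfl⟩ := Finset.mem_image.mp hw
        exact hα u (Nat.lt_succ_iff.mp (Finset.mem_range.mp hu))

theorem exists_sum_eq_sum_window {t : Finset (Fin (2 * ρ + 2) → F)}
    (ht : ↑t ⊆ constructionS F ρ) (h : ∀ u ≤ ρ, ∃ w ∈ t, w ↑(2 * u) ≠ 0)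
    (hcard : t.card ≤ ρ + 1) (c : (Fin (2 * ρ + 2) → F) → F) :
    ∃ α γ : ℕ → F, (∀ u ≤ ρ, levelPt ρ u (α u) ∈ t) ∧ ∑ w ∈ t, c w • w =
      ∑ u ∈ Finset.range (ρ + 1), window (2 * ρ + 2) u (γ u • levelVec u (α u)) := by
  classical
  obtain ⟨α, hα⟩ := exists_levelPt_mem ht h
  have himage : (Finset.range (ρ + 1)).image (fun u => levelPt ρ u (α u)) = t := by
    refine Finset.eq_of_subset_of_card_le (fun w hw => ?_) ?_
    · obtain ⟨u, hu, rfl⟩ := Finset.mem_image.mp hw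
      exact hα u (Nat.lt_succ_iff.mp (Finset.mem_range.mp hu))
    · rwa [Finset.card_image_of_injOn (injOn_levelPt α), Finset.card_range]
  refine ⟨α, fun u => c (levelPt ρ u (α u)), hα, ?_⟩
  rw [← himage, Finset.sum_image (injOn_levelPt α)]
  simp only [levelPt, map_smul]

end Levels

section Saturation

open Fin.NatCast

variable {F : Type} [Field F] {ρ : ℕ}

theorem levelPt_mem {u : ℕ} (hu : u ≤ ρ) (a : F) : levelPt ρ u a ∈ constructionS F ρ :=
  mem_constructionS_iff.mpr (Or.inl ⟨u, hu, a, rfl⟩)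

theorem unitV_last_mem : unitV F (2 * ρ + 2) (2 * ρ + 1) ∈ constructionS F ρ :=
  mem_constructionS_iff.mpr (Or.inr rfl)

theorem tail_last (v : Fin (2 * ρ + 2) → F) (d : F) :
    tail v (ρ + 1) d = d • unitV F (2 * ρ + 2) (2 * ρ + 1) := by
  funext i
  simp only [tail, unitV, Pi.smul_apply, smul_eq_mul]
  split_ifs <;> first | omega | simp

theorem IsCombOfAtMost.tail_of_tail_succ {v : Fin (2 * ρ + 2) → F} {u m k : ℕ} (hu : u ≤ ρ)
    {d d' : F} (h : IsCombOfAtMost (constructionS F ρ) m (tail v (u + 1) d'))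
    (hx : IsCombOfAtMost (Set.range (levelVec u)) k ![d, v ↑(2 * u), v ↑(2 * u + 1) - d']) :
    IsCombOfAtMost (constructionS F ρ) (m + k) (tail v u d) := by
  rw [tail_eq_tail_add_window v (by omega) d d']
  exact h.add (hx.map _ (by rintro _ ⟨a, rfl⟩; exact levelPt_mem hu a))

def TailBound (v : Fin (2 * ρ + 2) → F) (u k : ℕ) : Prop :=
  ∃ a b, a ≤ k ∧ a + b ≤ 2 * k + 1 ∧
    (∃ d, IsCombOfAtMost (constructionS F ρ) a (tail v u d)) ∧
    ∀ d, IsCombOfAtMost (constructionS F ρ) b (tail v u d)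

theorem tailBound_last (v : Fin (2 * ρ + 2) → F) : TailBound v (ρ + 1) 0 := by
  refine ⟨0, 1, le_rfl, le_rfl, ⟨0, ?_⟩, fun d => ?_⟩ <;> rw [tail_last]
  · exact isCombOfAtMost_of_eq_zero (zero_smul _ _)
  · exact isCombOfAtMost_smul unitV_last_mem d

theorem tailBound_of_succ [Fintype F] (hF : Fintype.card F = 4 ∨ 7 ≤ Fintype.card F)
    {v : Fin (2 * ρ + 2) → F} {u k : ℕ} (hu : 1 ≤ u) (huρ : u ≤ ρ)
    (h : TailBound v (u + 1) k) : TailBound v u (k + 1) := by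
  obtain ⟨a, b, hak, habk, ⟨d₀, h₀⟩, hall⟩ := h
  obtain ⟨u, rfl⟩ := Nat.exists_eq_add_of_le' hu
  by_cases hs : v ↑(2 * (u + 1)) = 0
  · by_cases hy : v ↑(2 * (u + 1) + 1) = d₀
    · refine ⟨a, a + 3, by omega, by omega, ⟨0, ?_⟩, fun d => ?_⟩
      · simpa using h₀.tail_of_tail_succ huρ (k := 0)
          (isCombOfAtMost_of_eq_zero (by rw [hs, hy, sub_self]; simp))
      · exact h₀.tail_of_tail_succ huρ
          (by rw [hs, hy, sub_self]; exact isCombOfAtMost_conic_three hF d)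
    · have hne : ∀ d ≠ 0, IsCombOfAtMost (constructionS F ρ) (a + 2) (tail v (u + 1) d) :=
        fun d hd => h₀.tail_of_tail_succ huρ (by
          rw [hs]; exact isCombOfAtMost_conic_two hF (Or.inr ⟨hd, sub_ne_zero.mpr hy⟩))
      have hzero : IsCombOfAtMost (constructionS F ρ) b (tail v (u + 1) 0) := by
        simpa using (hall (v ↑(2 * (u + 1) + 1))).tail_of_tail_succ huρ (k := 0)
          (isCombOfAtMost_of_eq_zero (by simp [hs]))
      refine ⟨min (a + 2) b, max (a + 2) b, by omega, by omega, ?_, fun d => ?_⟩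
      · by_cases hab : a + 2 ≤ b
        · exact ⟨1, (hne 1 one_ne_zero).mono (by omega)⟩
        · exact ⟨0, hzero.mono (by omega)⟩
      · by_cases hd : d = 0
        · exact hd ▸ hzero.mono (le_max_right _ _)
        · exact (hne d hd).mono (le_max_left _ _)
  · obtain ⟨d₁, h₁⟩ := exists_isCombOfAtMost_conic_one hs (v ↑(2 * (u + 1) + 1) - d₀)
    exact ⟨a + 1, a + 2, by omega, by omega, ⟨d₁, h₀.tail_of_tail_succ huρ h₁⟩,
      fun d => h₀.tail_of_tail_succ huρ (isCombOfAtMost_conic_two hF (Or.inl hs))⟩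

theorem tailBound [Fintype F] (hF : Fintype.card F = 4 ∨ 7 ≤ Fintype.card F)
    (v : Fin (2 * ρ + 2) → F) {u : ℕ} (hu : 1 ≤ u) (huρ : u ≤ ρ + 1) :
    TailBound v u (ρ + 1 - u) := by
  induction huρ using Nat.decreasingInduction with
  | self => simpa using tailBound_last v
  | of_succ k hk ih =>
    have := tailBound_of_succ hF hu (by omega) (ih (by omega))
    rwa [show ρ + 1 - (k + 1) + 1 = ρ + 1 - k by omega] at this

theorem isCombOfAtMost_line_one {s : F} (hs : s ≠ 0) (y : F) :
    IsCombOfAtMost (Set.range (levelVec 0)) 1 ![0, s, y] := by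
  convert isCombOfAtMost_smul (Set.mem_range_self (f := levelVec 0) (y / s)) s using 1
  rw [levelVec, Matrix.smul_vec3]
  refine Matrix.vec3_eq ?_ ?_ ?_ <;> simp only [smul_eq_mul]
  · ring
  · ring
  · field_simp

theorem isCombOfAtMost_line_two (s y : F) :
    IsCombOfAtMost (Set.range (levelVec 0)) 2 ![0, s, y] := by
  convert (isCombOfAtMost_smul (Set.mem_range_self (f := levelVec 0) 0) (s - y)).add
    (isCombOfAtMost_smul (Set.mem_range_self (f := levelVec 0) 1) y) using 1
  rw [levelVec, levelVec, Matrix.smul_vec3, Matrix.smul_vec3, Matrix.vec3_add]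
  refine Matrix.vec3_eq ?_ ?_ ?_ <;> simp only [smul_eq_mul] <;> ring

theorem saturatesWithin_constructionS [Fintype F]
    (hF : Fintype.card F = 4 ∨ 7 ≤ Fintype.card F) :
    SaturatesWithin (constructionS F ρ) (ρ + 1) := by
  intro v _
  obtain ⟨a, b, hak, habk, ⟨d₀, h₀⟩, hall⟩ := tailBound hF v le_rfl (by omega)
  rw [← tail_zero v 0]
  by_cases hs : v 0 = 0
  · by_cases ha : a < ρ
    · exact (h₀.tail_of_tail_succ (Nat.zero_le ρ) (isCombOfAtMost_line_two _ _)).mono (by omega)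
    · exact ((hall (v 1)).tail_of_tail_succ (Nat.zero_le ρ) (k := 0)
        (isCombOfAtMost_of_eq_zero (by simp [hs]))).mono (by omega)
  · exact (h₀.tail_of_tail_succ (Nat.zero_le ρ) (k := 1)
      (by simpa using isCombOfAtMost_line_one hs (v 1 - d₀))).mono (by omega)

end Saturation

theorem chain_apply_zero_eq_zero {F : Type} [Field F] {z : ℕ → Fin 3 → F} {u₀ ρ : ℕ}
    (hz : ∀ j, u₀ ≤ j → j ≤ ρ → (z j 0 = 0 ↔ z j 2 = 0))
    (hsum : ∀ j, u₀ ≤ j → j ≤ ρ → z j 2 + (if j < ρ then z (j + 1) 0 else 0) = 0)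
    {j : ℕ} (hj : u₀ ≤ j) (hjρ : j ≤ ρ) : z j 0 = 0 := by
  induction hjρ using Nat.decreasingInduction with
  | self => simpa using (hz ρ hj le_rfl).mpr (by simpa using hsum ρ hj le_rfl)
  | of_succ k hk ih =>
    have := hsum k hj hk.le
    rw [if_pos (by omega), ih (by omega), add_zero] at this
    exact (hz k hj hk.le).mpr this

section Minimality

open Fin.NatCast

variable {F : Type} [Field F] {ρ : ℕ}

theorem not_saturatesWithin_constructionS {k : ℕ} (hk : k ≤ ρ) :
    ¬ SaturatesWithin (constructionS F ρ) k := by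
  intro hsat
  have hv : ∀ u ≤ ρ, (∑ u ∈ Finset.range (ρ + 1), window (2 * ρ + 2) u (levelVec u (0 : F)))
      ↑(2 * u) ≠ 0 := fun u hu => by
    rw [sum_window_apply_two_mul _ hu]
    exact levelVec_one_ne_zero u 0
  obtain ⟨t, c, ht, htk, hsum⟩ := hsat _ fun h0 => hv 0 (Nat.zero_le _) (congrFun h0 _)
  have := le_card_of_forall_apply_two_mul_ne_zero ht fun u hu =>
    exists_mem_apply_ne_zero_of_eq_sum hsum (hv u hu)
  omega

theorem levelPt_mem_of_eq_sum {β : ℕ → F} {u₀ : ℕ} (hu₀ : u₀ ≤ ρ)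
    (hβ : ∀ j, u₀ < j → β j = 0) {t : Finset (Fin (2 * ρ + 2) → F)}
    {c : (Fin (2 * ρ + 2) → F) → F} (ht : ↑t ⊆ constructionS F ρ) (hcard : t.card ≤ ρ + 1)
    (hv : ∑ u ∈ Finset.range (ρ + 1), window (2 * ρ + 2) u (levelVec u (β u)) =
      ∑ w ∈ t, c w • w) :
    levelPt ρ u₀ (β u₀) ∈ t := by
  obtain ⟨α, γ, hα, hsum⟩ := exists_sum_eq_sum_window ht (fun u hu =>
    exists_mem_apply_ne_zero_of_eq_sum hv (by
      rw [sum_window_apply_two_mul _ hu]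
      exact levelVec_one_ne_zero _ _)) hcard c
  have key := congrFun (hv.trans hsum)
  have heven : ∀ j ≤ ρ, levelVec j (β j) 1 = γ j * levelVec j (α j) 1 := fun j hj => by
    simpa only [sum_window_apply_two_mul _ hj, Pi.smul_apply, smul_eq_mul] using key ↑(2 * j)
  have hodd : ∀ j ≤ ρ,
      levelVec j (β j) 2 + (if j < ρ then levelVec (j + 1) (β (j + 1)) 0 else 0) =
        γ j * levelVec j (α j) 2 +
          (if j < ρ then γ (j + 1) * levelVec (j + 1) (α (j + 1)) 0 else 0) :=
    fun j hj => by
      simpa only [sum_window_apply_two_mul_add_one _ hj, Pi.smul_apply, smul_eq_mul] using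
        key ↑(2 * j + 1)
  have hzero : ∀ j, u₀ < j → j ≤ ρ → γ j * levelVec j (α j) 0 = 0 := by
    intro j hj hjρ
    refine chain_apply_zero_eq_zero (z := fun j => γ j • levelVec j (α j)) (u₀ := u₀ + 1)
      (fun j hj _ => ?_) (fun j hj hjρ => ?_) hj hjρ
    · obtain ⟨k, rfl⟩ := Nat.exists_eq_add_of_le' (show 1 ≤ j by omega)
      exact mul_levelVec_succ_zero_eq_zero_iff k _ _
    · have := hodd j hjρ
      rw [hβ j hj, hβ (j + 1) (by omega), levelVec_two, zero_mul, zero_add,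
        levelVec_succ_zero_zero, ite_self] at this
      simpa using this.symm
  have h2 : levelVec u₀ (β u₀) 2 = γ u₀ * levelVec u₀ (α u₀) 2 := by
    have := hodd u₀ hu₀
    rwa [hβ (u₀ + 1) (by omega), levelVec_succ_zero_zero, ite_self, add_zero,
      ite_eq_right_iff.mpr fun h : u₀ < ρ => hzero (u₀ + 1) (by omega) h, add_zero] at this
  exact eq_of_smul_levelVec (heven u₀ hu₀).symm h2.symm ▸ hα u₀ hu₀

theorem unitV_mem_of_eq_sum {t : Finset (Fin (2 * ρ + 2) → F)}
    {c : (Fin (2 * ρ + 2) → F) → F} (ht : ↑t ⊆ constructionS F ρ) (hcard : t.card ≤ ρ + 1)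
    (hv : ∑ u ∈ Finset.range (ρ + 1),
      window (2 * ρ + 2) u (if u = ρ then ![0, 0, 1] else levelVec u 0) = ∑ w ∈ t, c w • w) :
    unitV F (2 * ρ + 2) (2 * ρ + 1) ∈ t := by
  by_contra hA
  have hlast : (∑ u ∈ Finset.range (ρ + 1),
      window (2 * ρ + 2) u (if u = ρ then ![0, 0, 1] else levelVec u (0 : F)))
      ↑(2 * ρ + 1) = 1 := by
    rw [sum_window_apply_two_mul_add_one _ le_rfl]
    simp
  have h : ∀ u ≤ ρ, ∃ w ∈ t, w ↑(2 * u) ≠ 0 := by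
    intro u hu
    rcases hu.lt_or_eq with hu | rfl
    · refine exists_mem_apply_ne_zero_of_eq_sum hv ?_
      rw [sum_window_apply_two_mul _ hu.le, if_neg hu.ne]
      exact levelVec_one_ne_zero _ _
    · obtain ⟨w, hwt, hw⟩ := exists_mem_apply_ne_zero_of_eq_sum hv (hlast ▸ one_ne_zero)
      obtain ⟨a, rfl⟩ :=
        exists_levelPt_eq_of_apply_last_ne_zero (ht hwt) (fun h => hA (h ▸ hwt)) hw
      exact ⟨_, hwt, by rw [levelPt_apply_two_mul le_rfl]; exact levelVec_one_ne_zero _ _⟩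
  obtain ⟨α, γ, -, hsum⟩ := exists_sum_eq_sum_window ht h hcard c
  have key := congrFun (hv.trans hsum)
  have h1 : γ ρ * levelVec ρ (α ρ) 1 = 0 := by
    have := key ↑(2 * ρ)
    rw [sum_window_apply_two_mul _ le_rfl, sum_window_apply_two_mul _ le_rfl] at this
    simpa using this.symm
  have h2 : γ ρ * levelVec ρ (α ρ) 2 = 1 := by
    have := key ↑(2 * ρ + 1)
    rw [sum_window_apply_two_mul_add_one _ le_rfl,
      sum_window_apply_two_mul_add_one _ le_rfl] at this
    simpa using this.symm
  rw [(mul_eq_zero.mp h1).resolve_right (levelVec_one_ne_zero _ _), zero_mul] at h2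
  exact zero_ne_one h2

theorem exists_forcing_vector {P : Fin (2 * ρ + 2) → F} (hP : P ∈ constructionS F ρ) :
    ∃ v ≠ 0, ∀ (t : Finset (Fin (2 * ρ + 2) → F)) (c : (Fin (2 * ρ + 2) → F) → F),
      ↑t ⊆ constructionS F ρ → t.card ≤ ρ + 1 → v = ∑ w ∈ t, c w • w → P ∈ t := by
  rcases mem_constructionS_iff.mp hP with ⟨u₀, hu₀, a, rfl⟩ | rfl
  · let β : ℕ → F := fun u => if u = u₀ then a else 0
    refine ⟨∑ u ∈ Finset.range (ρ + 1), window (2 * ρ + 2) u (levelVec u (β u)), fun h0 => ?_,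
      fun t c ht hcard hv => ?_⟩
    · have := congrFun h0 ((2 * 0 : ℕ) : Fin (2 * ρ + 2))
      rw [sum_window_apply_two_mul _ (Nat.zero_le _)] at this
      exact levelVec_one_ne_zero _ _ this
    · simpa [β] using
        levelPt_mem_of_eq_sum (β := β) hu₀ (fun j hj => if_neg hj.ne') ht hcard hv
  · refine ⟨_, fun h0 => ?_, fun t c ht hcard hv => unitV_mem_of_eq_sum ht hcard hv⟩
    have := congrFun h0 ((2 * ρ + 1 : ℕ) : Fin (2 * ρ + 2))
    rw [sum_window_apply_two_mul_add_one _ le_rfl] at this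
    simp at this

theorem not_isSaturatingSet_of_ssubset_constructionS {S' : Set (Fin (2 * ρ + 2) → F)}
    (hS' : S' ⊂ constructionS F ρ) : ¬ IsSaturatingSet S' ρ := by
  rintro ⟨hsat, -⟩
  obtain ⟨P, hP, hPS'⟩ := Set.exists_of_ssubset hS'
  obtain ⟨v, hv0, hv⟩ := exists_forcing_vector hP
  obtain ⟨t, c, ht, hcard, hsum⟩ := hsat v hv0
  exact hPS' (ht (hv t c (ht.trans hS'.subset) hcard hsum))

end Minimality

open Fin.NatCast in
theorem ncard_constructionS {F : Type} [Field F] [Fintype F] (ρ : ℕ) :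
    (constructionS F ρ).ncard = (ρ + 1) * Fintype.card F + 1 := by
  classical
  have hS : constructionS F ρ = ↑(insert (unitV F (2 * ρ + 2) (2 * ρ + 1))
      ((Finset.range (ρ + 1) ×ˢ Finset.univ).image fun p : ℕ × F => levelPt ρ p.1 p.2)) := by
    ext w
    simp only [mem_constructionS_iff, Finset.coe_insert, Finset.coe_image, Finset.coe_product,
      Finset.coe_range, Finset.coe_univ, Set.mem_insert_iff, Set.mem_image, Set.mem_prod,
      Set.mem_Iio, Set.mem_univ, and_true, Prod.exists, Nat.lt_succ_iff, exists_and_left]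
    rw [or_comm]
  rw [hS, Set.ncard_coe_finset, Finset.card_insert_of_notMem, Finset.card_image_of_injOn,
    Finset.card_product, Finset.card_range, Finset.card_univ]
  · rintro ⟨u, a⟩ hp ⟨u', a'⟩ - h
    obtain ⟨rfl, rfl⟩ := levelPt_inj (by simpa [Nat.lt_succ_iff] using hp) h
    rfl
  · simp only [Finset.mem_image, Finset.mem_product, Finset.mem_range, Finset.mem_univ, and_true,
      Prod.exists, not_exists, not_and]
    intro u a hu h
    have := congrFun h ↑(2 * u)
    rw [levelPt_apply_two_mul (by omega), unitV_last_apply_two_mul (by omega)] at this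
    exact levelVec_one_ne_zero u a this

/-- for a prime power `q = 4` or `q ≥ 7` and any `ρ ≥ 0`, the set
`S_ρ` of Construction S is a minimal `ρ`-saturating set of size `(ρ+1)q + 1`
in `PG(2ρ+1, q)`. -/
theorem stmt10 (q ρ : ℕ) (F : Type) [Field F] [Fintype F] (hF : Fintype.card F = q)
    (hq : q = 4 ∨ 7 ≤ q) :
    IsMinimalSaturatingSet (constructionS F ρ) ρ
    ∧ (constructionS F ρ).ncard = (ρ + 1) * q + 1 := by
  subst hF
  refine ⟨⟨⟨saturatesWithin_constructionS hq, fun k hk => ?_⟩, fun S' hS' => ?_⟩,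
    ncard_constructionS ρ⟩
  · exact not_saturatesWithin_constructionS (Nat.lt_succ_iff.mp hk)
  · exact not_isSaturatingSet_of_ssubset_constructionS hS'
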